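/- arXiv:1607.06604 — 9 statements merged into one kernel-verified Lean document; each statement's English description precedes it below -/
import Mathlib

section
/- Define volP : ℝ → ℝ by volP(t) = 80·(10·cos t + √(100·cos²t − 75))·sin t. Then the function t ↦ volP(t) − (1200·t − 1400·t³) is O(t⁵) as t → 0; that is, volP(t) = 1200·t − 1400·t³ + O(t⁵). -/
/-!
Since `cos t = 1 - t²/2 + O(t⁴)`, one has `100 cos² t - 75 = (5 - 10 t²)² + O(t⁴)`. As
`√a - b = (a - b²)/(√a + b)` with `√a + b ≥ b` bounded away from `0`, this gives
`√(100 cos² t - 75) = 5 - 10 t² + O(t⁴)`, hence `10 cos t + √(100 cos² t - 75) = 15 (1 - t²) + O(t⁴)`.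
Multiplying by `80 sin t = 80 (t - t³/6) + O(t⁵)` gives `1200 t - 1400 t³ + O(t⁵)`.
-/

open Real Filter Asymptotics Topology

theorem abs_sqrt_sub_le_div {a b : ℝ} (hb : 0 < b) : |√a - b| ≤ |a - b ^ 2| / b := by
  rw [le_div_iff₀ hb]
  rcases le_or_gt 0 a with ha | ha
  · calc |√a - b| * b ≤ |√a - b| * (√a + b) := by gcongr; linarith [sqrt_nonneg a]
      _ = |a - b ^ 2| := by
        rw [← abs_of_nonneg (by positivity : 0 ≤ √a + b), ← abs_mul]
        congr 1
        linear_combination sq_sqrt ha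
  · rw [sqrt_eq_zero'.2 ha.le, abs_of_nonpos (by linarith), abs_of_nonpos (by nlinarith)]
    nlinarith

theorem isBigO_sqrt_sub_of_tendsto {α : Type*} {l : Filter α} {f g : α → ℝ} {b : ℝ} (hb : 0 < b)
    (hg : Tendsto g l (𝓝 b)) : (fun x => √(f x) - g x) =O[l] fun x => f x - g x ^ 2 := by
  refine IsBigO.of_bound (2 / b) ?_
  filter_upwards [hg.eventually (eventually_gt_nhds (half_lt_self hb))] with x hx
  rw [norm_eq_abs, norm_eq_abs]
  calc |√(f x) - g x| ≤ |f x - g x ^ 2| / g x := abs_sqrt_sub_le_div (by linarith)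
    _ ≤ |f x - g x ^ 2| / (b / 2) := by gcongr
    _ = 2 / b * |f x - g x ^ 2| := by ring

theorem Real.sin_sub_taylor_isBigO :
    (fun x : ℝ => sin x - (x - x ^ 3 / 6)) =O[𝓝 0] fun x => x ^ 5 := by
  refine IsBigO.of_bound (1 / 100) ?_
  filter_upwards [Icc_mem_nhds (neg_lt_zero.2 one_pos) one_pos] with x hx
  rw [norm_eq_abs, norm_eq_abs, abs_pow]
  linarith [sin_bound (abs_le.2 hx)]

theorem Real.cos_sub_taylor_isBigO :
    (fun x : ℝ => cos x - (1 - x ^ 2 / 2)) =O[𝓝 0] fun x => x ^ 4 := by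
  refine IsBigO.of_bound (5 / 96) ?_
  filter_upwards [Icc_mem_nhds (neg_lt_zero.2 one_pos) one_pos] with x hx
  rw [norm_eq_abs, norm_eq_abs, abs_pow]
  linarith [cos_bound (abs_le.2 hx)]

theorem radicand_sub_sq_isBigO :
    (fun t : ℝ => (100 * cos t ^ 2 - 75) - (5 - 10 * t ^ 2) ^ 2) =O[𝓝 0] fun t => t ^ 4 := by
  have hsum : (fun t : ℝ => cos t + (1 - t ^ 2 / 2)) =O[𝓝 0] fun _ => (1 : ℝ) :=
    Tendsto.isBigO_one ℝ
      (by fun_prop : Continuous fun t : ℝ => cos t + (1 - t ^ 2 / 2)).continuousAt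
  have hsq := ((cos_sub_taylor_isBigO.mul hsum).const_mul_left 100).congr_right
    (g₂ := fun t : ℝ => t ^ 4) fun t => by ring
  exact (hsq.sub ((isBigO_refl _ _).const_mul_left 75)).congr_left fun t => by ring

theorem sqrt_radicand_sub_isBigO :
    (fun t : ℝ => √(100 * cos t ^ 2 - 75) - (5 - 10 * t ^ 2)) =O[𝓝 0] fun t => t ^ 4 := by
  have hg : Tendsto (fun t : ℝ => 5 - 10 * t ^ 2) (𝓝 0) (𝓝 5) := by
    simpa using (by fun_prop : Continuous fun t : ℝ => 5 - 10 * t ^ 2).tendsto 0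
  exact (isBigO_sqrt_sub_of_tendsto (by norm_num) hg).trans radicand_sub_sq_isBigO

theorem cos_add_sqrt_radicand_sub_isBigO :
    (fun t : ℝ => 10 * cos t + √(100 * cos t ^ 2 - 75) - 15 * (1 - t ^ 2)) =O[𝓝 0]
      fun t => t ^ 4 :=
  ((cos_sub_taylor_isBigO.const_mul_left 10).add sqrt_radicand_sub_isBigO).congr_left
    fun t => by ring

theorem stmt_3 (volP : ℝ → ℝ)
    (hvolP : ∀ t : ℝ, volP t =
        80 * (10 * cos t + Real.sqrt (100 * cos t ^ 2 - 75)) * sin t) :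
    (fun t : ℝ => volP t - (1200 * t - 1400 * t ^ 3)) =O[nhds 0] fun t : ℝ => t ^ 5 := by
  have hsin : (fun t : ℝ => sin t) =O[𝓝 0] fun t => t :=
    .of_bound 1 (.of_forall fun t => by simpa using abs_sin_le_abs)
  have hpoly : (fun t : ℝ => 1 - t ^ 2) =O[𝓝 0] fun _ => (1 : ℝ) :=
    Tendsto.isBigO_one ℝ (by fun_prop : Continuous fun t : ℝ => 1 - t ^ 2).continuousAt
  -- `volP t - (1200 t - 1400 t³) = 80 E t sin t + 1200 (1 - t²) (sin t - (t - t³/6)) + 200 t⁵`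
  -- where `E t = 10 cos t + √(100 cos² t - 75) - 15 (1 - t²)`
  have hE := ((cos_add_sqrt_radicand_sub_isBigO.const_mul_left 80).mul hsin).congr_right
    (g₂ := fun t : ℝ => t ^ 5) fun t => by ring
  have hS := ((hpoly.mul sin_sub_taylor_isBigO).const_mul_left 1200).congr_right
    (g₂ := fun t : ℝ => t ^ 5) fun t => by ring
  have hT := (isBigO_refl (fun t : ℝ => t ^ 5) (𝓝 0)).const_mul_left 200
  refine ((hE.add hS).add hT).congr_left fun t => ?_
  rw [hvolP]
  ring
end

section
/- Define f : ℝ → ℝ by f(t) = √(69 + 200·cos²t + 20·cos t·√(100·cos²t − 75)) and volQ : ℝ → ℝ by volQ(t) = (5/3)·√(438·f(t)² − f(t)⁴ − 4761). Then the function t ↦ volQ(t) − (50·√23 + (3750/√23)·t²) is O(t⁴) as t → 0; that is, volQ(t) = 50·√23 + (3750/√23)·t² + O(t⁴). -/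
/-!
Both radicands are smooth in `c = cos t` near `c = 1`, where they equal `25` and `20700`, so
`vol q(t) = V (cos t)` for a function `V` that is `C²` at `1`. Taylor's formula of order two
gives `V c = V 1 + V' 1 (c - 1) + O((c - 1)²)`, and `cos t = 1 - t² / 2 + O(t⁴)`, whence
`vol q(t) = V 1 - V' 1 t² / 2 + O(t⁴)` with `V 1 = 50√23` and `V' 1 = -7500/√23`.
-/

open Real Filter Asymptotics

theorem ContDiffAt.isBigO_sub_sub_smul_deriv {E : Type*} [NormedAddCommGroup E]
    [NormedSpace ℝ E] {f : ℝ → E} {a : ℝ} (hf : ContDiffAt ℝ 2 f a) :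
    (fun x => f x - f a - (x - a) • deriv f a) =O[nhds a] fun x => (x - a) ^ 2 := by
  obtain ⟨ε, hε, hC2⟩ := Metric.eventually_nhds_iff_ball.1 (hf.eventually (by simp))
  have hball : nhdsWithin a (Metric.ball a ε) = nhds a :=
    Metric.isOpen_ball.nhdsWithin_eq (Metric.mem_ball_self hε)
  have hf'' : HasDerivAt (deriv f) (deriv (deriv f) a) a :=
    ((hf.derivWithin (m := 1) (by norm_num)).differentiableAt one_ne_zero).hasDerivAt
  -- `φ'` is `o(x - a)` by differentiability of `f'` at `a`, so `φ` is `o((x - a)²)`.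
  set φ : ℝ → E := fun x => f x - (x - a) • deriv f a - ((x - a) ^ 2 / 2) • deriv (deriv f) a
  have hφ' : ∀ x ∈ Metric.ball a ε, HasDerivWithinAt φ
      (deriv f x - deriv f a - (x - a) • deriv (deriv f) a) (Metric.ball a ε) x := by
    intro x hx
    have h1 : HasDerivAt (fun y => (y - a) • deriv f a) (deriv f a) x := by
      simpa using ((hasDerivAt_id x).sub_const a).smul_const (deriv f a)
    have h2 : HasDerivAt (fun y => (y - a) ^ 2 / 2) (x - a) x :=
      ((((hasDerivAt_id' x).sub_const a).fun_pow 2).div_const 2).congr_deriv (by ring)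
    exact ((((hC2 x hx).differentiableAt (by norm_num)).hasDerivAt.sub h1).sub
      (h2.smul_const _)).hasDerivWithinAt
  have hφ : (fun x => φ x - φ a) =o[nhds a] fun x => (x - a) ^ 2 := by
    simpa [hball] using (convex_ball a ε).isLittleO_pow_succ_real (Metric.mem_ball_self hε) hφ'
      (n := 1) (by simpa [hball, sub_sub, add_comm] using hasDerivAt_iff_isLittleO.1 hf'')
  have hquad : (fun x => ((x - a) ^ 2 / 2) • deriv (deriv f) a) =O[nhds a]
      fun x => (x - a) ^ 2 :=
    isBigO_of_le' _ fun x => by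
      rw [norm_smul, norm_div, mul_comm]
      gcongr
      exact div_le_self (norm_nonneg _) (by norm_num)
  refine (hφ.isBigO.add hquad).congr_left fun x => ?_
  simp only [φ, sub_self, zero_pow two_ne_zero, zero_div, zero_smul, sub_zero]
  abel

namespace Real

theorem cos_sub_one_isBigO_sq : (fun t => cos t - 1) =O[nhds 0] fun t => t ^ 2 :=
  isBigO_of_le' (c := 1 / 2) _ fun t => by
    rw [norm_sub_rev, Real.norm_of_nonneg (sub_nonneg.2 (cos_le_one t)),
      Real.norm_of_nonneg (sq_nonneg t)]
    linarith [one_sub_sq_div_two_le_cos (x := t)]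

theorem cos_sub_quadratic_isBigO_pow_four :
    (fun t => cos t - (1 - t ^ 2 / 2)) =O[nhds 0] fun t => t ^ 4 := by
  refine IsBigO.of_bound (5 / 96) ?_
  filter_upwards [Metric.closedBall_mem_nhds (0 : ℝ) one_pos] with t ht
  rw [Metric.mem_closedBall, dist_zero_right, Real.norm_eq_abs] at ht
  rw [Real.norm_eq_abs, Real.norm_eq_abs, abs_pow, mul_comm]
  exact cos_bound ht

end Real

theorem ContDiffAt.isBigO_comp_cos {V : ℝ → ℝ} (hV : ContDiffAt ℝ 2 V 1) :
    (fun t => V (Real.cos t) - (V 1 - deriv V 1 * t ^ 2 / 2)) =O[nhds 0] fun t => t ^ 4 := by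
  have hcos : Tendsto Real.cos (nhds 0) (nhds 1) := by simpa using continuous_cos.tendsto 0
  have hsq : (fun t => (Real.cos t - 1) ^ 2) =O[nhds 0] fun t => t ^ 4 :=
    (cos_sub_one_isBigO_sq.pow 2).congr_right fun t => by ring
  have hV2 := (hV.isBigO_sub_sub_smul_deriv.comp_tendsto hcos).trans hsq
  refine (hV2.add (cos_sub_quadratic_isBigO_pow_four.const_mul_left (deriv V 1))).congr_left
    fun t => ?_
  simp only [Function.comp_apply, smul_eq_mul]
  ring

-- With `c = cos t`: `edgeSqOfCos c = |A'E'|² = f t ^ 2` and `volOfCos c = vol q(t)`.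
noncomputable def edgeSqOfCos (c : ℝ) : ℝ := 69 + 200 * c ^ 2 + 20 * c * √(100 * c ^ 2 - 75)

noncomputable def volOfCos (c : ℝ) : ℝ :=
  5 / 3 * √(438 * edgeSqOfCos c - edgeSqOfCos c ^ 2 - 4761)

theorem edgeSqOfCos_nonneg (c : ℝ) : 0 ≤ edgeSqOfCos c := by
  have hs : √(100 * c ^ 2 - 75) ^ 2 ≤ 100 * c ^ 2 := by
    rw [Real.sq_sqrt']
    exact max_le (by linarith) (by positivity)
  unfold edgeSqOfCos
  nlinarith [sq_nonneg (10 * c + √(100 * c ^ 2 - 75))]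

theorem contDiffAt_edgeSqOfCos {n : WithTop ℕ∞} {c : ℝ} (hc : 100 * c ^ 2 - 75 ≠ 0) :
    ContDiffAt ℝ n edgeSqOfCos c := by
  unfold edgeSqOfCos
  fun_prop (disch := exact hc)

theorem sqrt_edgeSqOfCos_radicand_one : √(100 * (1 : ℝ) ^ 2 - 75) = 5 := by
  rw [show (100 * (1 : ℝ) ^ 2 - 75) = 5 ^ 2 by norm_num, Real.sqrt_sq (by norm_num)]

theorem edgeSqOfCos_one : edgeSqOfCos 1 = 369 := by
  rw [edgeSqOfCos, sqrt_edgeSqOfCos_radicand_one]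
  norm_num

theorem sqrt_volOfCos_radicand_one :
    √(438 * edgeSqOfCos 1 - edgeSqOfCos 1 ^ 2 - 4761) = 30 * √23 := by
  rw [edgeSqOfCos_one, show (438 * 369 - 369 ^ 2 - 4761 : ℝ) = 30 ^ 2 * 23 by norm_num,
    Real.sqrt_mul (by norm_num), Real.sqrt_sq (by norm_num)]

theorem volOfCos_one : volOfCos 1 = 50 * √23 := by
  rw [volOfCos, sqrt_volOfCos_radicand_one]
  ring

theorem contDiffAt_volOfCos_one {n : WithTop ℕ∞} : ContDiffAt ℝ n volOfCos 1 := by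
  have hu : ContDiffAt ℝ n edgeSqOfCos 1 := contDiffAt_edgeSqOfCos (by norm_num)
  unfold volOfCos
  fun_prop (disch := norm_num [edgeSqOfCos_one])

theorem hasDerivAt_edgeSqOfCos_one : HasDerivAt edgeSqOfCos 900 1 := by
  have hradicand : HasDerivAt (fun c : ℝ => 100 * c ^ 2 - 75) 200 1 :=
    (((hasDerivAt_pow 2 (1 : ℝ)).const_mul 100).sub_const 75).congr_deriv (by norm_num)
  have hsqrt : HasDerivAt (fun c : ℝ => √(100 * c ^ 2 - 75)) 20 1 :=
    (hradicand.sqrt (by norm_num)).congr_deriv (by rw [sqrt_edgeSqOfCos_radicand_one]; norm_num)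
  refine ((((hasDerivAt_pow 2 (1 : ℝ)).const_mul 200).const_add 69).add
    (((hasDerivAt_id' (1 : ℝ)).const_mul 20).mul hsqrt)).congr_deriv ?_
  rw [sqrt_edgeSqOfCos_radicand_one]
  norm_num

theorem hasDerivAt_volOfCos_one : HasDerivAt volOfCos (-7500 / √23) 1 := by
  have hu := hasDerivAt_edgeSqOfCos_one
  have hradicand : HasDerivAt (fun c => 438 * edgeSqOfCos c - edgeSqOfCos c ^ 2 - 4761)
      (-270000) 1 :=
    (((hu.const_mul 438).fun_sub (hu.fun_pow 2)).sub_const 4761).congr_deriv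
      (by rw [edgeSqOfCos_one]; norm_num)
  have hne : 438 * edgeSqOfCos 1 - edgeSqOfCos 1 ^ 2 - 4761 ≠ 0 := by
    rw [edgeSqOfCos_one]
    norm_num
  refine ((hradicand.sqrt hne).const_mul (5 / 3 : ℝ)).congr_deriv ?_
  rw [sqrt_volOfCos_radicand_one]
  field_simp
  norm_num

theorem stmt_9 (f volQ : ℝ → ℝ)
    (hf : ∀ t : ℝ, f t = Real.sqrt (69 + 200 * cos t ^ 2 +
        20 * cos t * Real.sqrt (100 * cos t ^ 2 - 75)))
    (hvolQ : ∀ t : ℝ, volQ t =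
        (5 / 3) * Real.sqrt (438 * f t ^ 2 - f t ^ 4 - 4761)) :
    (fun t : ℝ => volQ t - (50 * Real.sqrt 23 + 3750 / Real.sqrt 23 * t ^ 2))
      =O[nhds 0] fun t : ℝ => t ^ 4 := by
  have hvol : ∀ t, volQ t = volOfCos (cos t) := fun t => by
    have hf2 : f t ^ 2 = edgeSqOfCos (cos t) := by
      rw [hf t]
      exact sq_sqrt (edgeSqOfCos_nonneg _)
    rw [hvolQ t, show f t ^ 4 = (f t ^ 2) ^ 2 by ring, hf2, volOfCos]
  convert contDiffAt_volOfCos_one.isBigO_comp_cos using 2 with t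
  rw [hvol, volOfCos_one, hasDerivAt_volOfCos_one.deriv]
  ring
end

section
/- Define volP : ℝ → ℝ by volP(t) = 80·(10·cos t + √(100·cos²t − 75))·sin t, f : ℝ → ℝ by f(t) = √(69 + 200·cos²t + 20·cos t·√(100·cos²t − 75)), and volQ : ℝ → ℝ by volQ(t) = (5/3)·√(438·f(t)² − f(t)⁴ − 4761). Then the ratio volQ(t)/volP(t) tends to +∞ as t tends to 0 from the right. In particular, for every constant c > 0 there exists t with 0 < t < π/6 such that 12 − 5·√3 < f(t) < 12 + 5·√3, volP(t) > 0, and volQ(t) > c·volP(t). -/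
/-!
As `t → 0⁺` the radicand `100 cos² t - 75` tends to `25`, so `volP t` behaves like
`1200 sin t → 0⁺`, whereas `thirdSide t → √369` and `volQ t → 50 √23 > 0`. Hence the ratio tends
to `+∞`, and `√369` lies strictly inside the triangle range `(12 - 5√3, 12 + 5√3)`, so all
requirements hold for every sufficiently small `t > 0`.
-/

open Real Filter Topology Set

noncomputable section

namespace Bipyramid

def volP (t : ℝ) : ℝ := 80 * (10 * cos t + √(100 * cos t ^ 2 - 75)) * sin t

/-- By Heron's formula `438 s² - s⁴ - 4761` is `16 A²` for the triangle with sides `12`, `5√3`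
and `s`, whose triangle inequalities read `12 - 5√3 < s < 12 + 5√3`. -/
def thirdSide (t : ℝ) : ℝ := √(69 + 200 * cos t ^ 2 + 20 * cos t * √(100 * cos t ^ 2 - 75))

def volQ (t : ℝ) : ℝ := 5 / 3 * √(438 * thirdSide t ^ 2 - thirdSide t ^ 4 - 4761)

lemma sqrt_radicand_zero : √(100 * cos 0 ^ 2 - 75) = 5 := by
  rw [cos_zero, show (100 * 1 ^ 2 - 75 : ℝ) = 5 ^ 2 by norm_num, sqrt_sq (by norm_num)]

lemma thirdSide_zero : thirdSide 0 = √369 := by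
  rw [thirdSide, sqrt_radicand_zero, cos_zero]
  norm_num

lemma volQ_zero : volQ 0 = 50 * √23 := by
  have h : (√369) ^ 2 = 369 := sq_sqrt (by norm_num)
  rw [volQ, thirdSide_zero, show (√369) ^ 4 = ((√369) ^ 2) ^ 2 by ring, h,
    show (438 * 369 - 369 ^ 2 - 4761 : ℝ) = 30 ^ 2 * 23 by norm_num, sqrt_mul' _ (by norm_num),
    sqrt_sq (by norm_num)]
  ring

lemma continuous_thirdSide : Continuous thirdSide := by
  unfold thirdSide; fun_prop

lemma continuous_volQ : Continuous volQ := by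
  unfold volQ thirdSide; fun_prop

lemma continuous_volP : Continuous volP := by
  unfold volP; fun_prop

lemma volP_pos {t : ℝ} (ht : t ∈ Ioo 0 (π / 2)) : 0 < volP t := by
  have hcos : 0 < cos t := cos_pos_of_mem_Ioo ⟨by linarith [ht.1, pi_pos], ht.2⟩
  have hsin : 0 < sin t := sin_pos_of_pos_of_lt_pi ht.1 (by linarith [ht.2, pi_pos])
  unfold volP
  positivity

lemma eventually_volP_pos : ∀ᶠ t in 𝓝[>] 0, 0 < volP t :=
  mem_of_superset (Ioo_mem_nhdsGT (by positivity)) fun _ ↦ volP_pos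

lemma tendsto_volP : Tendsto volP (𝓝[>] 0) (𝓝[>] 0) := by
  refine tendsto_nhdsWithin_of_tendsto_nhds_of_eventually_within _ ?_ eventually_volP_pos
  have h : Tendsto volP (𝓝[>] 0) (𝓝 (volP 0)) :=
    (continuous_volP.tendsto 0).mono_left nhdsWithin_le_nhds
  rwa [volP, sin_zero, mul_zero] at h

lemma tendsto_volQ_div_volP : Tendsto (fun t ↦ volQ t / volP t) (𝓝[>] 0) atTop := by
  have hQ : Tendsto volQ (𝓝[>] 0) (𝓝 (50 * √23)) := by
    simpa only [volQ_zero] using (continuous_volQ.tendsto 0).mono_left nhdsWithin_le_nhds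
  simpa only [div_eq_mul_inv, Pi.inv_apply] using
    hQ.pos_mul_atTop (by positivity) tendsto_volP.inv_tendsto_nhdsGT_zero

lemma sqrt_369_mem_Ioo : √369 ∈ Ioo (12 - 5 * √3) (12 + 5 * √3) := by
  have h3 : (5 / 4 : ℝ) < √3 := (lt_sqrt (by norm_num)).mpr (by norm_num)
  have h369 : (23 / 4 : ℝ) < √369 := (lt_sqrt (by norm_num)).mpr (by norm_num)
  have hsq : (√3) ^ 2 = 3 := sq_sqrt (by norm_num)
  exact ⟨by linarith, (sqrt_lt' (by positivity)).mpr (by nlinarith)⟩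

lemma eventually_thirdSide_mem_Ioo :
    ∀ᶠ t in 𝓝[>] 0, thirdSide t ∈ Ioo (12 - 5 * √3) (12 + 5 * √3) := by
  have h := continuous_thirdSide.tendsto 0
  rw [thirdSide_zero] at h
  exact (h.eventually (isOpen_Ioo.mem_nhds sqrt_369_mem_Ioo)).filter_mono nhdsWithin_le_nhds

end Bipyramid

end

theorem stmt_11 (volP f volQ : ℝ → ℝ)
    (hvolP : ∀ t : ℝ, volP t =
        80 * (10 * cos t + Real.sqrt (100 * cos t ^ 2 - 75)) * sin t)
    (hf : ∀ t : ℝ, f t = Real.sqrt (69 + 200 * cos t ^ 2 +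
        20 * cos t * Real.sqrt (100 * cos t ^ 2 - 75)))
    (hvolQ : ∀ t : ℝ, volQ t =
        (5 / 3) * Real.sqrt (438 * f t ^ 2 - f t ^ 4 - 4761)) :
    Tendsto (fun t : ℝ => volQ t / volP t) (nhdsWithin 0 (Set.Ioi 0)) atTop ∧
    ∀ c : ℝ, 0 < c → ∃ t : ℝ, 0 < t ∧ t < π / 6 ∧
      (12 - 5 * Real.sqrt 3 < f t ∧ f t < 12 + 5 * Real.sqrt 3) ∧
      volP t > 0 ∧ volQ t > c * volP t := by
  obtain rfl : volP = Bipyramid.volP := funext hvolP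
  obtain rfl : f = Bipyramid.thirdSide := funext hf
  obtain rfl : volQ = Bipyramid.volQ := funext hvolQ
  refine ⟨Bipyramid.tendsto_volQ_div_volP, fun c _ ↦ ?_⟩
  have hsmall : ∀ᶠ t in 𝓝[>] (0 : ℝ), t ∈ Ioo 0 (π / 6) :=
    Ioo_mem_nhdsGT (by positivity)
  obtain ⟨t, ⟨ht0, htπ⟩, hside, hpos, hratio⟩ :=
    (hsmall.and <| Bipyramid.eventually_thirdSide_mem_Ioo.and <|
      Bipyramid.eventually_volP_pos.and <|
        Bipyramid.tendsto_volQ_div_volP.eventually_gt_atTop c).exists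
  exact ⟨t, ht0, htπ, hside, hpos, (lt_div_iff₀ hpos).mp hratio⟩
end

section
/- Let 0 < t < π/6 and set a = 10·cos t + √(100·cos²t − 75). In Euclidean 3-space define the points A = (0, 0, a), B = (0, 10·sin t, √(100·cos²t − 75)), D = (0, −10·sin t, √(100·cos²t − 75)), E = (12, 0, 0), F = (−12, 0, 0), and C = (0,0,0) (so C is the midpoint of the segment EF). Then: dist(A,B) = dist(A,D) = 10; dist(B,E) = dist(B,F) = dist(D,E) = dist(D,F) = 13; dist(E,F) = 24; dist(A,E) = dist(A,F) = √(69 + 200·cos²t + 20·cos t·√(100·cos²t − 75)); dist(A,C) = a; dist(B,C) = dist(D,C) = 5; and dist(C,E) = dist(C,F) = 12. -/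
open Real

/-- The point of Euclidean 3-space with coordinates `x`, `y`, `z`. -/
noncomputable def pt (x y z : ℝ) : EuclideanSpace ℝ (Fin 3) :=
  (WithLp.equiv 2 (Fin 3 → ℝ)).symm ![x, y, z]

/-! Each distance is read off from coordinates; besides `sin t ^ 2 + cos t ^ 2 = 1`, the only
input is that the radicand `100 * cos t ^ 2 - 75` is nonnegative, i.e. `cos t ^ 2 > 3 / 4`,
which holds for `|t| < π / 6`. -/

lemma dist_pt (x₁ y₁ z₁ x₂ y₂ z₂ : ℝ) :
    dist (pt x₁ y₁ z₁) (pt x₂ y₂ z₂) = √((x₁ - x₂) ^ 2 + (y₁ - y₂) ^ 2 + (z₁ - z₂) ^ 2) := by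
  simp [EuclideanSpace.dist_eq, pt, Fin.sum_univ_three, Real.dist_eq, sq_abs]

lemma dist_pt_eq {x₁ y₁ z₁ x₂ y₂ z₂ d : ℝ}
    (h : (x₁ - x₂) ^ 2 + (y₁ - y₂) ^ 2 + (z₁ - z₂) ^ 2 = d ^ 2) (hd : 0 ≤ d) :
    dist (pt x₁ y₁ z₁) (pt x₂ y₂ z₂) = d := by
  rw [dist_pt, h, sqrt_sq hd]

lemma midpoint_pt (x₁ y₁ z₁ x₂ y₂ z₂ : ℝ) :
    midpoint ℝ (pt x₁ y₁ z₁) (pt x₂ y₂ z₂) = pt ((x₁ + x₂) / 2) ((y₁ + y₂) / 2) ((z₁ + z₂) / 2) := by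
  ext i
  fin_cases i <;> simp [pt, midpoint_eq_smul_add] <;> ring

lemma three_div_four_lt_cos_sq {t : ℝ} (ht : |t| < π / 6) : 3 / 4 < cos t ^ 2 := by
  have hcos : cos (π / 6) < cos t := by
    rw [← cos_abs t]
    exact cos_lt_cos_of_nonneg_of_le_pi_div_two (abs_nonneg t) (by linarith [pi_pos]) ht
  rw [← sq_cos_pi_div_six]
  exact pow_lt_pow_left₀ hcos (cos_nonneg_of_neg_pi_div_two_le_of_le (by linarith [pi_pos])
    (by linarith [pi_pos])) two_ne_zero

theorem stmt_12 (t : ℝ) (ht0 : 0 < t) (ht1 : t < π / 6)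
    (a : ℝ) (ha : a = 10 * cos t + Real.sqrt (100 * cos t ^ 2 - 75))
    (A B D E F C : EuclideanSpace ℝ (Fin 3))
    (hA : A = pt 0 0 a)
    (hB : B = pt 0 (10 * sin t) (Real.sqrt (100 * cos t ^ 2 - 75)))
    (hD : D = pt 0 (-(10 * sin t)) (Real.sqrt (100 * cos t ^ 2 - 75)))
    (hE : E = pt 12 0 0) (hF : F = pt (-12) 0 0) (hC : C = pt 0 0 0) :
    C = midpoint ℝ E F ∧
    dist A B = 10 ∧ dist A D = 10 ∧
    dist B E = 13 ∧ dist B F = 13 ∧ dist D E = 13 ∧ dist D F = 13 ∧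
    dist E F = 24 ∧
    dist A E = Real.sqrt (69 + 200 * cos t ^ 2 +
        20 * cos t * Real.sqrt (100 * cos t ^ 2 - 75)) ∧
    dist A F = Real.sqrt (69 + 200 * cos t ^ 2 +
        20 * cos t * Real.sqrt (100 * cos t ^ 2 - 75)) ∧
    dist A C = a ∧ dist B C = 5 ∧ dist D C = 5 ∧
    dist C E = 12 ∧ dist C F = 12 := by
  have hcos : 0 < cos t := cos_pos_of_mem_Ioo ⟨by linarith [pi_pos], by linarith [pi_pos]⟩
  have hr : √(100 * cos t ^ 2 - 75) ^ 2 = 100 * cos t ^ 2 - 75 :=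
    sq_sqrt (by linarith [three_div_four_lt_cos_sq (abs_lt.2 ⟨by linarith [pi_pos], ht1⟩)])
  have hpyth := sin_sq_add_cos_sq t
  subst hA hB hD hE hF hC ha
  refine ⟨by rw [midpoint_pt]; norm_num,
    dist_pt_eq (by linear_combination 100 * hpyth) (by norm_num),
    dist_pt_eq (by linear_combination 100 * hpyth) (by norm_num),
    dist_pt_eq (by linear_combination 100 * hpyth + hr) (by norm_num),
    dist_pt_eq (by linear_combination 100 * hpyth + hr) (by norm_num),
    dist_pt_eq (by linear_combination 100 * hpyth + hr) (by norm_num),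
    dist_pt_eq (by linear_combination 100 * hpyth + hr) (by norm_num),
    dist_pt_eq (by norm_num) (by norm_num), ?_, ?_,
    dist_pt_eq (by ring) (by positivity),
    dist_pt_eq (by linear_combination 100 * hpyth + hr) (by norm_num),
    dist_pt_eq (by linear_combination 100 * hpyth + hr) (by norm_num),
    dist_pt_eq (by norm_num) (by norm_num), dist_pt_eq (by norm_num) (by norm_num)⟩
  all_goals rw [dist_pt]; congr 1; linear_combination hr
end

section
/- Let 0 < t < π/6 and set a = 10·cos t + √(100·cos²t − 75). In Euclidean 3-space let A = (0, 0, a), B = (0, 10·sin t, √(100·cos²t − 75)), D = (0, −10·sin t, √(100·cos²t − 75)), E = (12, 0, 0), F = (−12, 0, 0). Then the Lebesgue volume of the convex hull of {A, B, D, E, F} equals 80·(10·cos t + √(100·cos²t − 75))·sin t = 80·a·sin t. -/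
/-!
Put `s = √(100 cos² t - 75)`. The midpoint `(0, 0, s)` of the edge `BD` lies in the triangle
`AEF`, on the segment from `A` to the midpoint `0` of `EF`; hence the plane `y = 0` cuts the
polytope into the tetrahedra `ABEF` and `ADEF`. Each is an affine image of the corner simplex
`{x ≥ 0, ∑ xᵢ ≤ 1}`, of volume `1/3!`, under a map of determinant `±240 a sin t`, so each has
volume `40 a sin t`.
-/

open Real

open MeasureTheory Set
open scoped Pointwise

section Segment

variable {𝕜 E : Type*} [Field 𝕜] [LinearOrder 𝕜] [IsStrictOrderedRing 𝕜]
  [AddCommGroup E] [Module 𝕜 E]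

theorem segment_eq_union_of_mem {x y m : E} (hm : m ∈ segment 𝕜 x y) :
    segment 𝕜 x y = segment 𝕜 x m ∪ segment 𝕜 m y := by
  rw [segment_eq_image_lineMap] at hm
  obtain ⟨t, ht, rfl⟩ := hm
  calc segment 𝕜 x y = AffineMap.lineMap x y '' segment 𝕜 (0 : 𝕜) 1 := by
        rw [image_segment, AffineMap.lineMap_apply_zero, AffineMap.lineMap_apply_one]
    _ = AffineMap.lineMap x y '' (segment 𝕜 0 t ∪ segment 𝕜 t 1) := by
        rw [segment_eq_Icc zero_le_one, segment_eq_Icc ht.1, segment_eq_Icc ht.2,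
          Icc_union_Icc_eq_Icc ht.1 ht.2]
    _ = _ := by
        rw [image_union, image_segment, image_segment, AffineMap.lineMap_apply_zero,
          AffineMap.lineMap_apply_one]

theorem convexHull_insert_insert_subset_union {x y m : E} {s : Set E}
    (hm : m ∈ segment 𝕜 x y) (hms : m ∈ convexHull 𝕜 s) :
    convexHull 𝕜 (insert x (insert y s)) ⊆
      convexHull 𝕜 (insert x s) ∪ convexHull 𝕜 (insert y s) := by
  have hs : s.Nonempty := convexHull_nonempty_iff.1 ⟨m, hms⟩
  have segment_subset {z q k : E} (hq : q ∈ segment 𝕜 z m) (hk : k ∈ convexHull 𝕜 s) :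
      segment 𝕜 q k ⊆ convexHull 𝕜 (insert z s) := by
    have hmono := convexHull_mono (𝕜 := 𝕜) (subset_insert z s)
    refine (convex_convexHull 𝕜 _).segment_subset ?_ (hmono hk)
    exact (convex_convexHull 𝕜 _).segment_subset (subset_convexHull 𝕜 _ (mem_insert z s))
      (hmono hms) hq
  intro p hp
  rw [insert_eq, insert_eq y, ← union_assoc, ← insert_eq,
    convexHull_union (insert_nonempty _ _) hs, convexHull_pair, mem_convexJoin,
    segment_eq_union_of_mem hm] at hp
  obtain ⟨q, hq | hq, k, hk, hp⟩ := hp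
  · exact Or.inl (segment_subset hq hk hp)
  · exact Or.inr (segment_subset (segment_symm 𝕜 m y ▸ hq) hk hp)

end Segment

def cornerSimplex (ι : Type*) [Fintype ι] (c : ℝ) : Set (ι → ℝ) :=
  {x | (∀ i, 0 ≤ x i) ∧ ∑ i, x i ≤ c}

section Simplex

variable {ι : Type*} [Fintype ι]

theorem convex_cornerSimplex (c : ℝ) : Convex ℝ (cornerSimplex ι c) := by
  intro x hx y hy a b ha hb hab
  refine ⟨fun i => ?_, ?_⟩
  · simpa using add_nonneg (mul_nonneg ha (hx.1 i)) (mul_nonneg hb (hy.1 i))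
  · simp only [Pi.add_apply, Pi.smul_apply, smul_eq_mul, Finset.sum_add_distrib,
      ← Finset.mul_sum]
    calc a * ∑ i, x i + b * ∑ i, y i ≤ a * c + b * c := by gcongr; exacts [hx.2, hy.2]
      _ = c := by rw [← add_mul, hab, one_mul]

theorem cornerSimplex_eq_empty {c : ℝ} (hc : c < 0) : cornerSimplex ι c = ∅ :=
  eq_empty_of_forall_notMem fun _ hx =>
    (hc.trans_le (Finset.sum_nonneg fun i _ => hx.1 i)).not_ge hx.2

theorem convexHull_insert_zero_range_single [DecidableEq ι] :
    convexHull ℝ (insert 0 (range fun i => Pi.single i 1)) = cornerSimplex ι 1 := by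
  refine (convexHull_min ?_ (convex_cornerSimplex 1)).antisymm fun x hx => ?_
  · rintro _ (rfl | ⟨i, rfl⟩)
    · simp [cornerSimplex]
    · refine ⟨fun j => ?_, by simp⟩
      rcases eq_or_ne j i with rfl | h <;> simp [*]
  · -- the index `none` stands for the vertex `0`
    have := (convex_convexHull ℝ
      (insert 0 (range fun i => Pi.single (M := fun _ => ℝ) i 1))).sum_mem (t := Finset.univ) (w := fun o : Option ι => o.elim (1 - ∑ i, x i) x)
      (z := fun o => o.elim 0 fun i => Pi.single i 1)
      (by rintro (_ | i) - <;> simp [hx.1, hx.2])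
      (by simp [Fintype.sum_option])
      (by rintro (_ | i) - <;> apply subset_convexHull <;> simp)
    simpa [Fintype.sum_option, ← pi_eq_sum_univ'] using this

theorem volume_cornerSimplex (n : ℕ) {c : ℝ} (hc : 0 ≤ c) :
    volume (cornerSimplex (Fin n) c) = ENNReal.ofReal (c ^ n / n.factorial) := by
  induction n generalizing c with
  | zero => simp [cornerSimplex, hc, volume_pi]
  | succ n ih =>
    set T : Set (ℝ × (Fin n → ℝ)) := {p | 0 ≤ p.1 ∧ p.2 ∈ cornerSimplex (Fin n) (c - p.1)}
    have hT : MeasurableSet T := by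
      simp only [T, cornerSimplex]
      measurability
    have hpre : cornerSimplex (Fin (n + 1)) c =
        MeasurableEquiv.piFinSuccAbove (fun _ => ℝ) 0 ⁻¹' T := by
      ext x
      simp [T, cornerSimplex, Fin.forall_fin_succ, Fin.sum_univ_succ, le_sub_iff_add_le',
        Fin.tail, and_assoc]
    have hslice (x : ℝ) : volume (Prod.mk x ⁻¹' T) =
        (Icc 0 c).indicator (fun x => ENNReal.ofReal ((c - x) ^ n / n.factorial)) x := by
      by_cases hx : x ∈ Icc 0 c
      · rw [indicator_of_mem hx, ← ih (sub_nonneg.2 hx.2)]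
        congr 1
        ext y
        simp [T, hx.1]
      · rw [indicator_of_notMem hx, show Prod.mk x ⁻¹' T = ∅ from ?_, measure_empty]
        rcases not_and_or.1 hx with hx | hx
        · ext y
          simp [T, not_le.1 hx]
        · simp [T, cornerSimplex_eq_empty (sub_neg.2 (not_le.1 hx))]
    rw [hpre, (volume_preserving_piFinSuccAbove (fun _ => ℝ) 0).measure_preimage
      hT.nullMeasurableSet, Measure.volume_eq_prod, Measure.prod_apply hT]
    simp_rw [hslice]
    rw [lintegral_indicator measurableSet_Icc, ← ofReal_integral_eq_lintegral_ofReal,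
      integral_Icc_eq_integral_Ioc, ← intervalIntegral.integral_of_le hc]
    · congr 1
      rw [intervalIntegral.integral_div, intervalIntegral.integral_comp_sub_left (· ^ n),
        integral_pow]
      simp only [sub_zero, sub_self, ne_eq, Nat.add_eq_zero_iff, one_ne_zero, and_false,
        not_false_eq_true, zero_pow, Nat.factorial_succ, Nat.cast_mul, Nat.cast_add, Nat.cast_one]
      field_simp
    · exact (continuous_const.sub continuous_id |>.pow n |>.div_const _).integrableOn_Icc
    · filter_upwards [ae_restrict_mem measurableSet_Icc] with x hx
      exact div_nonneg (pow_nonneg (sub_nonneg.2 hx.2) n) (Nat.cast_nonneg _)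

theorem volume_convexHull_insert_range {n : ℕ} (p : Fin n → ℝ) (v : Fin n → Fin n → ℝ) :
    volume (convexHull ℝ (insert p (range v))) =
      ENNReal.ofReal (|(Matrix.of fun i => v i - p).det| / n.factorial) := by
  set M := Matrix.of fun i => v i - p
  have himage : convexHull ℝ (insert p (range v)) =
      p +ᵥ M.vecMulLinear '' cornerSimplex (Fin n) 1 := by
    rw [← convexHull_insert_zero_range_single, LinearMap.image_convexHull, ← convexHull_vadd,
      image_insert_eq, map_zero, ← range_comp, vadd_set_insert, vadd_eq_add, add_zero,
      vadd_set_range]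
    congr
    ext i : 1
    simp [M]
  have hdet : LinearMap.det M.vecMulLinear = M.det := by
    rw [← Matrix.mulVecLin_transpose, ← Matrix.toLin'_apply', LinearMap.det_toLin',
      Matrix.det_transpose]
  rw [himage, measure_vadd, Measure.addHaar_image_linearMap, hdet,
    volume_cornerSimplex n zero_le_one, ← ENNReal.ofReal_mul (abs_nonneg _)]
  congr 1
  ring

end Simplex

theorem aedisjoint_of_subset_coord_nonneg_nonpos {ι : Type*} [Fintype ι] {s t : Set (ι → ℝ)}
    (i : ι) (hs : s ⊆ {x | 0 ≤ x i}) (ht : t ⊆ {x | x i ≤ 0}) : AEDisjoint volume s t :=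
  measure_mono_null (fun _ hx => le_antisymm (ht hx.2) (hs hx.1)) (Measure.pi_hyperplane _ i 0)

theorem volume_convexHull_image_toLp {ι : Type*} [Fintype ι] (s : Set (ι → ℝ)) :
    volume (convexHull ℝ (WithLp.toLp 2 '' s) : Set (EuclideanSpace ℝ ι)) =
      volume (convexHull ℝ s) := by
  have h : convexHull ℝ (WithLp.toLp 2 '' s) = WithLp.ofLp ⁻¹' convexHull ℝ s := by
    rw [← image_eq_preimage_of_inverse (WithLp.ofLp_toLp 2) (WithLp.toLp_ofLp 2)]
    exact ((WithLp.linearEquiv 2 ℝ (ι → ℝ)).symm.toLinearMap.image_convexHull s).symm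
  rw [h]
  exact (PiLp.volume_preserving_ofLp ι).measure_preimage
    ((convex_convexHull ℝ s).nullMeasurableSet (μ := volume))

theorem volume_convexHull_tetrahedron (a y s c : ℝ) :
    volume (convexHull ℝ {![0, 0, a], ![0, y, s], ![c, 0, 0], ![-c, 0, 0]} :
      Set (Fin 3 → ℝ)) = ENNReal.ofReal (|a * y * c| / 3) := by
  have hvol := volume_convexHull_insert_range ![0, 0, a] ![![0, y, s], ![c, 0, 0], ![-c, 0, 0]]
  simp only [Matrix.range_cons, Matrix.range_empty, union_empty, singleton_union] at hvol
  have hdet : (Matrix.of fun i => ![![0, y, s], ![c, 0, 0], ![-c, 0, 0]] i - ![0, 0, a]).det =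
      2 * (a * y * c) := by
    simp [Matrix.det_fin_three]
    ring
  rw [hvol, hdet, abs_mul 2, abs_two]
  congr 1
  rw [show ((3 : ℕ).factorial : ℝ) = 6 by norm_num [Nat.factorial]]
  ring

theorem convexHull_bipyramid_eq_union {a b s c : ℝ} (hs : 0 ≤ s) (hsa : s ≤ a) :
    convexHull ℝ {![0, 0, a], ![0, b, s], ![0, -b, s], ![c, 0, 0], ![-c, 0, 0]} =
      convexHull ℝ {![0, 0, a], ![0, b, s], ![c, 0, 0], ![-c, 0, 0]} ∪
        convexHull ℝ {![0, 0, a], ![0, -b, s], ![c, 0, 0], ![-c, 0, 0]} := by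
  have hmid : ![0, 0, s] ∈ segment ℝ ![0, b, s] ![0, -b, s] := by
    refine ⟨1 / 2, 1 / 2, by norm_num, by norm_num, by norm_num, ?_⟩
    ext i
    fin_cases i <;> simp [← two_mul]
  have hcenter : ![0, 0, s] ∈ convexHull ℝ {![0, 0, a], ![c, 0, 0], ![-c, 0, 0]} := by
    have h0 : (0 : Fin 3 → ℝ) ∈ convexHull ℝ {![0, 0, a], ![c, 0, 0], ![-c, 0, 0]} := by
      refine segment_subset_convexHull (x := ![c, 0, 0]) (y := ![-c, 0, 0]) (by simp) (by simp)
        ⟨1 / 2, 1 / 2, by norm_num, by norm_num, by norm_num, ?_⟩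
      ext i
      fin_cases i <;> simp
    refine (convex_convexHull ℝ _).segment_subset h0 (subset_convexHull ℝ _ (mem_insert _ _)) ?_
    let f : ℝ →ᵃ[ℝ] (Fin 3 → ℝ) := AffineMap.lineMap 0 ![0, 0, 1]
    simpa [f, AffineMap.lineMap_apply] using
      mem_segment_iff_wbtw.2 ((Wbtw.of_le_of_le hs hsa).map f)
  refine subset_antisymm ?_ (union_subset (convexHull_mono ?_) (convexHull_mono ?_))
  · rw [insert_comm ![0, 0, a] ![0, b, s], insert_comm ![0, 0, a] ![0, -b, s],
      insert_comm ![0, 0, a] ![0, b, s]]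
    exact convexHull_insert_insert_subset_union hmid hcenter
  all_goals
    intro x hx
    simp only [mem_insert_iff, mem_singleton_iff] at hx ⊢
    tauto

theorem volume_convexHull_bipyramid {a b s c : ℝ} (hb : 0 ≤ b) (hs : 0 ≤ s) (hsa : s ≤ a) :
    volume (convexHull ℝ {![0, 0, a], ![0, b, s], ![0, -b, s], ![c, 0, 0], ![-c, 0, 0]} :
      Set (Fin 3 → ℝ)) = ENNReal.ofReal (2 * a * b * |c| / 3) := by
  have hupper : convexHull ℝ {![0, 0, a], ![0, b, s], ![c, 0, 0], ![-c, 0, 0]} ⊆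
      {x : Fin 3 → ℝ | 0 ≤ x 1} :=
    convexHull_min (by simp [insert_subset_iff, hb])
      (convex_halfSpace_ge ⟨fun _ _ => rfl, fun _ _ => rfl⟩ 0)
  have hlower : convexHull ℝ {![0, 0, a], ![0, -b, s], ![c, 0, 0], ![-c, 0, 0]} ⊆
      {x : Fin 3 → ℝ | x 1 ≤ 0} :=
    convexHull_min (by simp [insert_subset_iff, hb])
      (convex_halfSpace_le ⟨fun _ _ => rfl, fun _ _ => rfl⟩ 0)
  rw [convexHull_bipyramid_eq_union hs hsa, measure_union₀
    ((convex_convexHull ℝ _).nullMeasurableSet _)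
    (aedisjoint_of_subset_coord_nonneg_nonpos 1 hupper hlower), volume_convexHull_tetrahedron,
    volume_convexHull_tetrahedron, ← ENNReal.ofReal_add (by positivity) (by positivity)]
  congr 1
  simp only [abs_mul, abs_neg, abs_of_nonneg hb, abs_of_nonneg (hs.trans hsa)]
  ring

theorem stmt_13 (t : ℝ) (ht0 : 0 < t) (ht1 : t < π / 6)
    (a : ℝ) (ha : a = 10 * cos t + Real.sqrt (100 * cos t ^ 2 - 75))
    (A B D E F : EuclideanSpace ℝ (Fin 3))
    (hA : A = pt 0 0 a)
    (hB : B = pt 0 (10 * sin t) (Real.sqrt (100 * cos t ^ 2 - 75)))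
    (hD : D = pt 0 (-(10 * sin t)) (Real.sqrt (100 * cos t ^ 2 - 75)))
    (hE : E = pt 12 0 0) (hF : F = pt (-12) 0 0) :
    MeasureTheory.volume (convexHull ℝ ({A, B, D, E, F} : Set (EuclideanSpace ℝ (Fin 3))))
      = ENNReal.ofReal (80 * a * sin t) := by
  subst hA hB hD hE hF
  set s := √(100 * cos t ^ 2 - 75)
  have hcos : 0 ≤ cos t := cos_nonneg_of_mem_Icc ⟨by linarith [pi_pos], by linarith⟩
  have hsin : 0 ≤ sin t := sin_nonneg_of_nonneg_of_le_pi ht0.le (by linarith [pi_pos])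
  have hpts : ({pt 0 0 a, pt 0 (10 * sin t) s, pt 0 (-(10 * sin t)) s, pt 12 0 0, pt (-12) 0 0} :
      Set (EuclideanSpace ℝ (Fin 3))) = WithLp.toLp 2 ''
        {![0, 0, a], ![0, 10 * sin t, s], ![0, -(10 * sin t), s], ![12, 0, 0], ![-12, 0, 0]} := by
    simp [pt, image_insert_eq]
  rw [hpts, volume_convexHull_image_toLp,
    volume_convexHull_bipyramid (by positivity) (sqrt_nonneg _) (by rw [ha]; linarith)]
  congr 1
  rw [abs_of_pos (by norm_num : (0 : ℝ) < 12)]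
  ring
end

section
/- Let 0 < t < π/6 and set a = 10·cos t + √(100·cos²t − 75). In Euclidean 3-space let A = (0, 0, a), B = (0, 10·sin t, √(100·cos²t − 75)), D = (0, −10·sin t, √(100·cos²t − 75)), E = (12, 0, 0), F = (−12, 0, 0). Then each of the five points A, B, D, E, F is an extreme point of the convex hull of {A, B, D, E, F}. -/
/-!
Each of the five points is the unique maximiser over the five points of a coordinate functional:
`z` for `A` (as `a > √(100 cos² t - 75) ≥ 0`), `±y` for `B` and `D` (as `sin t > 0`) and `±x`
for `E` and `F`. A point `x ∈ s` at which a linear functional `f` is strictly maximal over `s`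
is extreme in `convexHull s`: the hull lies in `{x} ∪ {f < f x}`, a convex set in which `x` is
extreme.
-/

open Real

open Set

section

variable {𝕜 E : Type*} [Ring 𝕜] [LinearOrder 𝕜] [IsStrictOrderedRing 𝕜]
  [AddCommGroup E] [Module 𝕜 E]

theorem apply_add_smul_lt_of_mem_insert_halfSpace_lt (f : E →ₗ[𝕜] 𝕜) {x y₁ y₂ : E}
    (hy₁ : y₁ ∈ insert x {y | f y < f x}) (hy₂ : y₂ ∈ insert x {y | f y < f x})
    (hne : y₁ ≠ x ∨ y₂ ≠ x) {a b : 𝕜} (ha : 0 < a) (hb : 0 < b) (hab : a + b = 1) :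
    f (a • y₁ + b • y₂) < f x := by
  have hle : ∀ y ∈ insert x {y | f y < f x}, f y ≤ f x := by
    rintro y (rfl | hy)
    exacts [le_rfl, hy.le]
  rw [map_add, map_smul, map_smul, smul_eq_mul, smul_eq_mul]
  calc a * f y₁ + b * f y₂ < a * f x + b * f x := by
        rcases hne with h | h
        · have h₁ : f y₁ < f x := hy₁.resolve_left h
          exact add_lt_add_of_lt_of_le (mul_lt_mul_of_pos_left h₁ ha)
            (mul_le_mul_of_nonneg_left (hle y₂ hy₂) hb.le)
        · have h₂ : f y₂ < f x := hy₂.resolve_left h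
          exact add_lt_add_of_le_of_lt (mul_le_mul_of_nonneg_left (hle y₁ hy₁) ha.le)
            (mul_lt_mul_of_pos_left h₂ hb)
    _ = f x := by rw [← add_mul, hab, one_mul]

theorem convex_insert_halfSpace_lt (f : E →ₗ[𝕜] 𝕜) (x : E) :
    Convex 𝕜 (insert x {y | f y < f x}) := by
  refine convex_iff_forall_pos.2 fun y₁ hy₁ y₂ hy₂ a b ha hb hab => ?_
  by_cases h : y₁ = x ∧ y₂ = x
  · rw [h.1, h.2, ← add_smul, hab, one_smul]
    exact mem_insert x _
  · exact Or.inr <|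
      apply_add_smul_lt_of_mem_insert_halfSpace_lt f hy₁ hy₂ (not_and_or.1 h) ha hb hab

theorem mem_extremePoints_insert_halfSpace_lt (f : E →ₗ[𝕜] 𝕜) (x : E) :
    x ∈ (insert x {y | f y < f x}).extremePoints 𝕜 := by
  refine ⟨mem_insert x _, fun y₁ hy₁ y₂ hy₂ ⟨a, b, ha, hb, hab, hx⟩ => ?_⟩
  by_contra h
  exact
    (hx ▸ apply_add_smul_lt_of_mem_insert_halfSpace_lt f hy₁ hy₂ (Or.inl h) ha hb hab).false

theorem mem_extremePoints_convexHull_of_forall_lt {s : Set E} {x : E} (f : E →ₗ[𝕜] 𝕜)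
    (hx : x ∈ s) (h : ∀ y ∈ s, y ≠ x → f y < f x) :
    x ∈ (convexHull 𝕜 s).extremePoints 𝕜 :=
  have hs : convexHull 𝕜 s ⊆ insert x {y | f y < f x} :=
    convexHull_min (fun y hy => (eq_or_ne y x).imp id (h y hy)) (convex_insert_halfSpace_lt f x)
  inter_extremePoints_subset_extremePoints_of_subset hs
    ⟨subset_convexHull 𝕜 s hx, mem_extremePoints_insert_halfSpace_lt f x⟩

end

@[simp]
theorem ofLp_pt (x y z : ℝ) : (pt x y z).ofLp = ![x, y, z] := rfl

theorem stmt_14 (t : ℝ) (ht0 : 0 < t) (ht1 : t < π / 6)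
    (a : ℝ) (ha : a = 10 * cos t + Real.sqrt (100 * cos t ^ 2 - 75))
    (A B D E F : EuclideanSpace ℝ (Fin 3))
    (hA : A = pt 0 0 a)
    (hB : B = pt 0 (10 * sin t) (Real.sqrt (100 * cos t ^ 2 - 75)))
    (hD : D = pt 0 (-(10 * sin t)) (Real.sqrt (100 * cos t ^ 2 - 75)))
    (hE : E = pt 12 0 0) (hF : F = pt (-12) 0 0) :
    ∀ X ∈ ({A, B, D, E, F} : Set (EuclideanSpace ℝ (Fin 3))),
      X ∈ Set.extremePoints ℝ
        (convexHull ℝ ({A, B, D, E, F} : Set (EuclideanSpace ℝ (Fin 3)))) := by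
  have hsin : 0 < sin t := sin_pos_of_pos_of_lt_pi ht0 (by linarith [pi_pos])
  have hcos : 0 < cos t := cos_pos_of_mem_Ioo ⟨by linarith, by linarith [pi_pos]⟩
  have ha0 : 0 < 10 * cos t + √(100 * cos t ^ 2 - 75) := by
    linarith [sqrt_nonneg (100 * cos t ^ 2 - 75)]
  subst hA hB hD hE hF ha
  rintro X (rfl | rfl | rfl | rfl | rfl) <;>
    [apply mem_extremePoints_convexHull_of_forall_lt (EuclideanSpace.projₗ 2);
     apply mem_extremePoints_convexHull_of_forall_lt (EuclideanSpace.projₗ 1);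
     apply mem_extremePoints_convexHull_of_forall_lt (-EuclideanSpace.projₗ 1);
     apply mem_extremePoints_convexHull_of_forall_lt (EuclideanSpace.projₗ 0);
     apply mem_extremePoints_convexHull_of_forall_lt (-EuclideanSpace.projₗ 0)]
  all_goals simp [hsin, hcos, ha0]
end

section
/- Let x be a real number with 12 − 5·√3 < x < 12 + 5·√3, and set e₁ = (219 − x²)/(10·√3) and e₂ = √(438·x² − x⁴ − 4761)/(10·√3). In Euclidean 3-space define the points A' = (5·√3, 0, 0), B' = (0, 5, 0), D' = (0, −5, 0), E' = (e₁, 0, e₂), F' = (e₁, 0, −e₂), and C' = (0,0,0) (so C' is the midpoint of the segment B'D'). Then e₂ > 0 and: dist(A',B') = dist(A',D') = dist(B',D') = 10; dist(B',E') = dist(B',F') = dist(D',E') = dist(D',F') = 13; dist(A',E') = dist(A',F') = x; dist(A',C') = 5·√3; dist(B',C') = dist(D',C') = 5; and dist(C',E') = dist(C',F') = 12. -/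
open Real

/-!
In the plane `y = 0`, `(e₁, e₂)` is the third vertex of the triangle with vertices `C' = 0` and
`A' = (5√3, 0)` and sides `|C'E'| = 12`, `|A'E'| = x`: `e₁` comes from the law of cosines and
`10√3 · e₂` is four times the area given by Heron's formula, whose radicand is positive exactly by
the triangle inequality `|5√3 - 12| < x < 5√3 + 12`. The apexes thus lie on the circle of radius 12
about the midpoint `C'` of `B'D'` in the plane perpendicular to `B'D'`, hence at distance
`√(12² + 5²) = 13` from `B'` and `D'`.
-/

lemma dist_pt_s15 (a b c a' b' c' : ℝ) :
    dist (pt a b c) (pt a' b' c') = √((a - a') ^ 2 + (b - b') ^ 2 + (c - c') ^ 2) := by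
  rw [EuclideanSpace.dist_eq]
  simp [pt, Fin.sum_univ_three, Real.dist_eq, sq_abs]

lemma dist_pt_eq_s15 {a b c a' b' c' r : ℝ} (hr : 0 ≤ r)
    (h : (a - a') ^ 2 + (b - b') ^ 2 + (c - c') ^ 2 = r ^ 2) :
    dist (pt a b c) (pt a' b' c') = r := by
  rw [dist_pt_s15, h, Real.sqrt_sq hr]

lemma midpoint_pt_s15 (a b c a' b' c' : ℝ) :
    midpoint ℝ (pt a b c) (pt a' b' c') = pt ((a + a') / 2) ((b + b') / 2) ((c + c') / 2) := by
  ext i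
  fin_cases i <;>
    simp only [pt, WithLp.equiv_symm_apply, midpoint_eq_smul_add, invOf_eq_inv, smul_add,
      PiLp.add_apply, PiLp.smul_apply, smul_eq_mul, Fin.zero_eta, Fin.mk_one, Fin.reduceFinMk,
      Fin.isValue, Matrix.cons_val, Matrix.cons_val_zero, Matrix.cons_val_one] <;>
    ring

section TriangleApex

variable {a r x : ℝ}

lemma heron_discriminant_pos (h₁ : |a - r| < x) (h₂ : x < a + r) :
    0 < 4 * a ^ 2 * r ^ 2 - (a ^ 2 + r ^ 2 - x ^ 2) ^ 2 := by
  have hx : 0 < x := (abs_nonneg _).trans_lt h₁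
  have hlt : (a - r) ^ 2 < x ^ 2 := sq_lt_sq.2 (by rwa [abs_of_pos hx])
  have hgt : x ^ 2 < (a + r) ^ 2 := sq_lt_sq' (by linarith) h₂
  calc (0 : ℝ) < ((a + r) ^ 2 - x ^ 2) * (x ^ 2 - (a - r) ^ 2) :=
        mul_pos (sub_pos.2 hgt) (sub_pos.2 hlt)
    _ = 4 * a ^ 2 * r ^ 2 - (a ^ 2 + r ^ 2 - x ^ 2) ^ 2 := by ring

lemma apex_sq_add_sq (ha : a ≠ 0)
    (hD : 0 ≤ 4 * a ^ 2 * r ^ 2 - (a ^ 2 + r ^ 2 - x ^ 2) ^ 2) :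
    ((a ^ 2 + r ^ 2 - x ^ 2) / (2 * a)) ^ 2
      + (√(4 * a ^ 2 * r ^ 2 - (a ^ 2 + r ^ 2 - x ^ 2) ^ 2) / (2 * a)) ^ 2 = r ^ 2 := by
  rw [div_pow, div_pow, Real.sq_sqrt hD]
  field_simp
  ring

lemma sub_apex_sq_add_sq (ha : a ≠ 0)
    (hD : 0 ≤ 4 * a ^ 2 * r ^ 2 - (a ^ 2 + r ^ 2 - x ^ 2) ^ 2) :
    (a - (a ^ 2 + r ^ 2 - x ^ 2) / (2 * a)) ^ 2
      + (√(4 * a ^ 2 * r ^ 2 - (a ^ 2 + r ^ 2 - x ^ 2) ^ 2) / (2 * a)) ^ 2 = x ^ 2 := by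
  rw [div_pow (√_), Real.sq_sqrt hD]
  field_simp
  ring

end TriangleApex

lemma apex_of_triangle_inequality {x e₁ e₂ : ℝ}
    (hx1 : 12 - 5 * √3 < x) (hx2 : x < 12 + 5 * √3)
    (he₁ : e₁ = (219 - x ^ 2) / (10 * √3))
    (he₂ : e₂ = √(438 * x ^ 2 - x ^ 4 - 4761) / (10 * √3)) :
    0 < e₂ ∧ e₁ ^ 2 + e₂ ^ 2 = 12 ^ 2 ∧ (5 * √3 - e₁) ^ 2 + e₂ ^ 2 = x ^ 2 := by
  have hs : √3 ^ 2 = 3 := Real.sq_sqrt (by norm_num)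
  have hs_lt : 5 * √3 < 12 := by nlinarith [Real.sqrt_nonneg 3]
  have ha : 5 * √3 ≠ 0 := by positivity
  have hD := heron_discriminant_pos (a := 5 * √3) (r := 12) (x := x)
    (by rwa [abs_sub_comm, abs_of_pos (by linarith)]) (by linarith)
  have hD_eq : 4 * (5 * √3) ^ 2 * 12 ^ 2 - ((5 * √3) ^ 2 + 12 ^ 2 - x ^ 2) ^ 2
      = 438 * x ^ 2 - x ^ 4 - 4761 := by rw [mul_pow, hs]; ring
  have hdenom : 2 * (5 * √3) = 10 * √3 := by ring
  have hnum : (5 * √3) ^ 2 + 12 ^ 2 - x ^ 2 = 219 - x ^ 2 := by linear_combination 25 * hs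
  have hCE := apex_sq_add_sq ha hD.le
  have hAE := sub_apex_sq_add_sq ha hD.le
  rw [hD_eq, hdenom, hnum, ← he₁, ← he₂] at hCE hAE
  rw [hD_eq] at hD
  exact ⟨he₂ ▸ div_pos (Real.sqrt_pos.2 hD) (by positivity), hCE, hAE⟩

theorem stmt_15 (x : ℝ)
    (hx1 : 12 - 5 * Real.sqrt 3 < x) (hx2 : x < 12 + 5 * Real.sqrt 3)
    (e₁ e₂ : ℝ)
    (he₁ : e₁ = (219 - x ^ 2) / (10 * Real.sqrt 3))
    (he₂ : e₂ = Real.sqrt (438 * x ^ 2 - x ^ 4 - 4761) / (10 * Real.sqrt 3))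
    (A' B' D' E' F' C' : EuclideanSpace ℝ (Fin 3))
    (hA' : A' = pt (5 * Real.sqrt 3) 0 0)
    (hB' : B' = pt 0 5 0) (hD' : D' = pt 0 (-5) 0)
    (hE' : E' = pt e₁ 0 e₂) (hF' : F' = pt e₁ 0 (-e₂)) (hC' : C' = pt 0 0 0) :
    C' = midpoint ℝ B' D' ∧ e₂ > 0 ∧
    dist A' B' = 10 ∧ dist A' D' = 10 ∧ dist B' D' = 10 ∧
    dist B' E' = 13 ∧ dist B' F' = 13 ∧ dist D' E' = 13 ∧ dist D' F' = 13 ∧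
    dist A' E' = x ∧ dist A' F' = x ∧
    dist A' C' = 5 * Real.sqrt 3 ∧ dist B' C' = 5 ∧ dist D' C' = 5 ∧
    dist C' E' = 12 ∧ dist C' F' = 12 := by
  subst hA' hB' hD' hE' hF' hC'
  obtain ⟨he₂_pos, hCE, hAE⟩ := apex_of_triangle_inequality hx1 hx2 he₁ he₂
  have hs : √3 ^ 2 = 3 := Real.sq_sqrt (by norm_num)
  have hx : 0 < x := by nlinarith [Real.sqrt_nonneg 3]
  refine ⟨by rw [midpoint_pt_s15]; norm_num, he₂_pos,
    ?_, ?_, ?_, ?_, ?_, ?_, ?_, ?_, ?_, ?_, ?_, ?_, ?_, ?_⟩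
  · exact dist_pt_eq_s15 (by norm_num) (by linear_combination 25 * hs)
  · exact dist_pt_eq_s15 (by norm_num) (by linear_combination 25 * hs)
  · exact dist_pt_eq_s15 (by norm_num) (by norm_num)
  · exact dist_pt_eq_s15 (by norm_num) (by linear_combination hCE)
  · exact dist_pt_eq_s15 (by norm_num) (by linear_combination hCE)
  · exact dist_pt_eq_s15 (by norm_num) (by linear_combination hCE)
  · exact dist_pt_eq_s15 (by norm_num) (by linear_combination hCE)
  · exact dist_pt_eq_s15 hx.le (by linear_combination hAE)
  · exact dist_pt_eq_s15 hx.le (by linear_combination hAE)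
  · exact dist_pt_eq_s15 (by positivity) (by ring)
  · exact dist_pt_eq_s15 (by norm_num) (by norm_num)
  · exact dist_pt_eq_s15 (by norm_num) (by norm_num)
  · exact dist_pt_eq_s15 (by norm_num) (by linear_combination hCE)
  · exact dist_pt_eq_s15 (by norm_num) (by linear_combination hCE)
end

section
/- Let x be a real number with √219 < x < 12 + 5·√3, and set e₁ = (219 − x²)/(10·√3) and e₂ = √(438·x² − x⁴ − 4761)/(10·√3). In Euclidean 3-space let A' = (5·√3, 0, 0), B' = (0, 5, 0), D' = (0, −5, 0), E' = (e₁, 0, e₂), F' = (e₁, 0, −e₂). Then the union of the convex hull of {A', B', D', E'} and the convex hull of {A', B', D', F'} is not a convex set. (In fact, the midpoint (e₁, 0, 0) of the segment E'F' does not belong to the union, since e₁ < 0.) -/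
/-!
The base triangle `A'B'D'` lies in the plane `z = 0` on the side `x ≥ 0`, while the apexes
`E', F' = (e₁, 0, ±e₂)` lie over the point `(e₁, 0, 0)` with `e₁ < 0`. The plane through the
`y`-axis and `E'` therefore supports the first tetrahedron, and `(e₁, 0, 0)`, the midpoint of
`E'F'`, is strictly on its other side; symmetrically for the second tetrahedron.
-/

open Real

@[simp] lemma pt_apply_zero (x y z : ℝ) : pt x y z 0 = x := rfl

@[simp] lemma pt_apply_two (x y z : ℝ) : pt x y z 2 = z := rfl

lemma midpoint_pt_pt_neg (x y z : ℝ) : midpoint ℝ (pt x y z) (pt x y (-z)) = pt x y 0 := by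
  ext i
  fin_cases i <;> simp [pt, midpoint_eq_smul_add] <;> ring

theorem pt_notMem_convexHull_of_base_apex {t : Set (EuclideanSpace ℝ (Fin 3))} {e₁ c : ℝ}
    (he₁ : e₁ < 0) (hc : c ≠ 0)
    (ht : ∀ p ∈ t, (0 ≤ p 0 ∧ p 2 = 0) ∨ (p 0 = e₁ ∧ p 2 = c)) (y : ℝ) :
    pt e₁ y 0 ∉ convexHull ℝ t := by
  -- `φ` vanishes on the `y`-axis and at the apex, and the factor `c ^ 2` makes it nonnegative on
  -- the base whatever the sign of `c`.
  let φ : EuclideanSpace ℝ (Fin 3) →L[ℝ] ℝ :=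
    c ^ 2 • EuclideanSpace.proj 0 - (e₁ * c) • EuclideanSpace.proj 2
  have hφ (p : EuclideanSpace ℝ (Fin 3)) : φ p = c ^ 2 * p 0 - e₁ * c * p 2 := rfl
  have hsub : convexHull ℝ t ⊆ {p | 0 ≤ φ p} := by
    refine convexHull_min (fun p hp => ?_) (convex_halfSpace_ge φ.toLinearMap.isLinear 0)
    rcases ht p hp with ⟨hp0, hp2⟩ | ⟨hp0, hp2⟩
    · simp only [Set.mem_ofPred_eq, hφ, hp2, mul_zero, sub_zero]
      positivity
    · simp only [Set.mem_ofPred_eq, hφ, hp0, hp2]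
      exact le_of_eq (by ring)
  intro hmem
  have := hsub hmem
  simp only [Set.mem_ofPred_eq, hφ, pt_apply_zero, pt_apply_two, mul_zero, sub_zero] at this
  exact (mul_neg_of_pos_of_neg (sq_pos_of_ne_zero hc) he₁).not_ge this

lemma not_convex_of_midpoint_notMem {E : Type*} [AddCommGroup E] [Module ℝ E] {s : Set E}
    {a b : E} (ha : a ∈ s) (hb : b ∈ s) (hab : midpoint ℝ a b ∉ s) : ¬ Convex ℝ s :=
  fun hs => hab (hs.midpoint_mem ha hb)

lemma radicand_pos {x : ℝ} (hx1 : Real.sqrt 219 < x) (hx2 : x < 12 + 5 * Real.sqrt 3) :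
    0 < 438 * x ^ 2 - x ^ 4 - 4761 := by
  have hs3 : Real.sqrt 3 ^ 2 = 3 := Real.sq_sqrt (by norm_num)
  have hx0 : 0 < x := (Real.sqrt_nonneg 219).trans_lt hx1
  have hlow : 219 < x ^ 2 := (Real.sqrt_lt' hx0).1 hx1
  -- `(12 + 5√3)² = 219 + 120√3` and the radicand is `(120√3)² - (x² - 219)²`.
  have hup : x ^ 2 < 219 + 120 * Real.sqrt 3 := by nlinarith
  nlinarith

theorem stmt_17 (x : ℝ)
    (hx1 : Real.sqrt 219 < x) (hx2 : x < 12 + 5 * Real.sqrt 3)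
    (e₁ e₂ : ℝ)
    (he₁ : e₁ = (219 - x ^ 2) / (10 * Real.sqrt 3))
    (he₂ : e₂ = Real.sqrt (438 * x ^ 2 - x ^ 4 - 4761) / (10 * Real.sqrt 3))
    (A' B' D' E' F' : EuclideanSpace ℝ (Fin 3))
    (hA' : A' = pt (5 * Real.sqrt 3) 0 0)
    (hB' : B' = pt 0 5 0) (hD' : D' = pt 0 (-5) 0)
    (hE' : E' = pt e₁ 0 e₂) (hF' : F' = pt e₁ 0 (-e₂)) :
    ¬ Convex ℝ
        (convexHull ℝ ({A', B', D', E'} : Set (EuclideanSpace ℝ (Fin 3))) ∪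
         convexHull ℝ ({A', B', D', F'} : Set (EuclideanSpace ℝ (Fin 3)))) ∧
    e₁ < 0 ∧
    midpoint ℝ E' F' ∉
        (convexHull ℝ ({A', B', D', E'} : Set (EuclideanSpace ℝ (Fin 3))) ∪
         convexHull ℝ ({A', B', D', F'} : Set (EuclideanSpace ℝ (Fin 3)))) := by
  have h3 : 0 < Real.sqrt 3 := Real.sqrt_pos.2 (by norm_num)
  have he₁neg : e₁ < 0 := by
    have : Real.sqrt 219 ^ 2 = 219 := Real.sq_sqrt (by norm_num)
    rw [he₁]
    exact div_neg_of_neg_of_pos (by nlinarith [Real.sqrt_nonneg 219]) (by positivity)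
  have he₂ne : e₂ ≠ 0 := by
    rw [he₂]
    exact (div_pos (Real.sqrt_pos.2 (radicand_pos hx1 hx2)) (by positivity)).ne'
  have hmid : midpoint ℝ E' F' ∉
      convexHull ℝ ({A', B', D', E'} : Set (EuclideanSpace ℝ (Fin 3))) ∪
        convexHull ℝ {A', B', D', F'} := by
    subst hA' hB' hD' hE' hF'
    rw [midpoint_pt_pt_neg]
    rintro (h | h)
    · refine pt_notMem_convexHull_of_base_apex he₁neg he₂ne ?_ 0 h
      rintro p (rfl | rfl | rfl | rfl) <;> simp [h3.le]
    · refine pt_notMem_convexHull_of_base_apex he₁neg (neg_ne_zero.2 he₂ne) ?_ 0 h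
      rintro p (rfl | rfl | rfl | rfl) <;> simp [h3.le]
  refine ⟨not_convex_of_midpoint_notMem ?_ ?_ hmid, he₁neg, hmid⟩
  · exact Or.inl (subset_convexHull ℝ _ (by simp))
  · exact Or.inr (subset_convexHull ℝ _ (by simp))
end

section
/- For every constant c > 0 there exist ten points A, B, D, E, F, A', B', D', E', F' in Euclidean 3-space such that, writing C for the midpoint of segment EF and C' for the midpoint of segment B'D', the following hold: (i) the corresponding distances agree: dist(A,B) = dist(A',B'), dist(A,D) = dist(A',D'), dist(A,E) = dist(A',E'), dist(A,F) = dist(A',F'), dist(B,E) = dist(B',E'), dist(B,F) = dist(B',F'), dist(D,E) = dist(D',E'), dist(D,F) = dist(D',F'), dist(B,C) = dist(B',C'), dist(D,C) = dist(D',C'), dist(C,E) = dist(C',E'), dist(C,F) = dist(C',F'); (ii) the Lebesgue volume of the convex hull of {A, B, D, E, F} is strictly positive; and (iii) the Lebesgue volume of the union of the convex hull of {A', B', D', E'} and the convex hull of {A', B', D', F'} is strictly greater than c times the Lebesgue volume of the convex hull of {A, B, D, E, F}. -/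
/-!
Take `A = (0,1,0)`, `E = (-1,0,0)`, `F = (1,0,0)` and the apexes `B = (0,-1,h)`, `D = (0,-1,-h)`.
Then `P` lies in the box `[-1,1]² × [-h,h]`, so its volume is at most `8h`, and it contains a
smaller box, so its volume is positive.
For `Q` put `C' = 0`, `B', D' = (∓b,0,0)` with `b = √(1+h²)`, `A' = (0,√3,0)` and
`E', F' = (0, √3/3, ±√6/3)`; the twelve distances then agree for every `h`. Since `b ≥ 1`, the
tetrahedron `A'B'D'E'` contains the regular tetrahedron `(±1,0,0), A', E'` of edge `2`, hence a box
of volume `√3·√6/256` independent of `h`. Choosing `h` small makes `vol Q / vol P` exceed `c`.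
-/

open MeasureTheory Set

local notation "ℝ³" => EuclideanSpace ℝ (Fin 3)

theorem smul_vec3 (a x y z : ℝ) : a • (!₂[x, y, z] : ℝ³) = !₂[a * x, a * y, a * z] := by
  simp [← WithLp.toLp_smul]

theorem vec3_add_vec3 (x₁ y₁ z₁ x₂ y₂ z₂ : ℝ) :
    (!₂[x₁, y₁, z₁] : ℝ³) + !₂[x₂, y₂, z₂] = !₂[x₁ + x₂, y₁ + y₂, z₁ + z₂] := by
  simp [← WithLp.toLp_add]

theorem vec3_eq_vec3 {x₁ y₁ z₁ x₂ y₂ z₂ : ℝ} (hx : x₁ = x₂) (hy : y₁ = y₂) (hz : z₁ = z₂) :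
    (!₂[x₁, y₁, z₁] : ℝ³) = !₂[x₂, y₂, z₂] := by
  rw [hx, hy, hz]

theorem exists_eq_vec3 (p : ℝ³) : ∃ x y z, p = !₂[x, y, z] :=
  ⟨p 0, p 1, p 2, by ext i; fin_cases i <;> rfl⟩

theorem midpoint_vec3 (x₁ y₁ z₁ x₂ y₂ z₂ : ℝ) :
    midpoint ℝ (!₂[x₁, y₁, z₁] : ℝ³) !₂[x₂, y₂, z₂] =
      !₂[(x₁ + x₂) / 2, (y₁ + y₂) / 2, (z₁ + z₂) / 2] := by
  rw [midpoint_eq_smul_add, vec3_add_vec3, smul_vec3]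
  apply vec3_eq_vec3 <;> simp only [invOf_eq_inv] <;> ring

theorem dist_vec3 (x₁ y₁ z₁ x₂ y₂ z₂ : ℝ) :
    dist (!₂[x₁, y₁, z₁] : ℝ³) !₂[x₂, y₂, z₂] =
      √((x₁ - x₂) ^ 2 + (y₁ - y₂) ^ 2 + (z₁ - z₂) ^ 2) := by
  simp [EuclideanSpace.dist_eq, Fin.sum_univ_three, Real.dist_eq, sq_abs]

section Box
variable {ι : Type*}

def box (l u : ι → ℝ) : Set (EuclideanSpace ℝ ι) := WithLp.ofLp ⁻¹' Icc l u

theorem mem_box {l u : ι → ℝ} {x : EuclideanSpace ℝ ι} :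
    x ∈ box l u ↔ ∀ i, x i ∈ Icc (l i) (u i) := by
  simp [box, Pi.le_def, forall_and]

theorem convex_box (l u : ι → ℝ) : Convex ℝ (box l u) :=
  (convex_Icc l u).linear_preimage (WithLp.linearEquiv 2 ℝ (ι → ℝ)).toLinearMap

theorem volume_box [Fintype ι] (l u : ι → ℝ) :
    volume (box l u) = ∏ i, ENNReal.ofReal (u i - l i) := by
  rw [box, (PiLp.volume_preserving_ofLp ι).measure_preimage measurableSet_Icc.nullMeasurableSet,
    Real.volume_Icc_pi]

end Box

theorem volume_box_vec3 (l₀ l₁ l₂ u₀ u₁ u₂ : ℝ) :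
    volume (box ![l₀, l₁, l₂] ![u₀, u₁, u₂]) =
      ENNReal.ofReal (u₀ - l₀) * ENNReal.ofReal (u₁ - l₁) * ENNReal.ofReal (u₂ - l₂) := by
  rw [volume_box, Fin.prod_univ_three]; rfl

theorem Convex.add_smul_four_mem {𝕜 E : Type*} [Field 𝕜] [LinearOrder 𝕜] [IsStrictOrderedRing 𝕜]
    [AddCommGroup E] [Module 𝕜 E] {s : Set E}
    (hs : Convex 𝕜 s) {p₁ p₂ p₃ p₄ : E} (h₁ : p₁ ∈ s) (h₂ : p₂ ∈ s) (h₃ : p₃ ∈ s) (h₄ : p₄ ∈ s)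
    {a b c d : 𝕜} (ha : 0 ≤ a) (hb : 0 ≤ b) (hc : 0 ≤ c) (hd : 0 ≤ d) (habcd : a + b + c + d = 1) :
    a • p₁ + b • p₂ + c • p₃ + d • p₄ ∈ s := by
  have := hs.sum_mem (t := Finset.univ) (w := ![a, b, c, d]) (z := ![p₁, p₂, p₃, p₄])
    (by intro i _; fin_cases i <;> assumption) (by simpa [Fin.sum_univ_four])
    (by intro i _; fin_cases i <;> assumption)
  simpa [Fin.sum_univ_four] using this

theorem box_subset_convexHull_bipyramid {h : ℝ} (hh : 0 < h) :
    box ![-(1 / 8), 0, h / 8] ![1 / 8, 1 / 8, h / 4] ⊆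
      convexHull ℝ
        {!₂[0, 1, 0], !₂[0, -1, h], !₂[0, -1, -h], !₂[-1, 0, 0], (!₂[1, 0, 0] : ℝ³)} := by
  intro p hp
  obtain ⟨x, y, z, rfl⟩ := exists_eq_vec3 p
  obtain ⟨hx, hx'⟩ : -(1 / 8) ≤ x ∧ x ≤ 1 / 8 := mem_box.1 hp 0
  obtain ⟨hy, hy'⟩ : 0 ≤ y ∧ y ≤ 1 / 8 := mem_box.1 hp 1
  obtain ⟨hz, hz'⟩ : h / 8 ≤ z ∧ z ≤ h / 4 := mem_box.1 hp 2
  set d := z / h with hd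
  have hd₁ : 1 / 8 ≤ d := by rw [hd, le_div_iff₀ hh]; linarith
  have hd₂ : d ≤ 1 / 4 := by rw [hd, div_le_iff₀ hh]; linarith
  have hp : !₂[x, y, z] = (y + d) • !₂[0, 1, 0] + ((1 - y - 2 * d - x) / 2) • !₂[-1, 0, 0]
      + ((1 - y - 2 * d + x) / 2) • !₂[1, 0, 0] + d • (!₂[0, -1, h] : ℝ³) := by
    simp only [smul_vec3, vec3_add_vec3]
    apply vec3_eq_vec3
    · ring
    · ring
    · rw [hd]; field_simp; ring
  rw [hp]
  refine (convex_convexHull ℝ _).add_smul_four_mem (subset_convexHull ℝ _ (by simp))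
    (subset_convexHull ℝ _ (by simp)) (subset_convexHull ℝ _ (by simp))
    (subset_convexHull ℝ _ (by simp)) ?_ ?_ ?_ ?_ ?_ <;> linarith

theorem volume_convexHull_bipyramid_pos {h : ℝ} (hh : 0 < h) :
    0 < volume (convexHull ℝ
      {!₂[0, 1, 0], !₂[0, -1, h], !₂[0, -1, -h], !₂[-1, 0, 0], (!₂[1, 0, 0] : ℝ³)}) := by
  refine lt_of_lt_of_le ?_ (measure_mono (box_subset_convexHull_bipyramid hh))
  have hbox : h / 8 < h / 4 := by linarith
  simp [volume_box_vec3, hbox]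

theorem volume_convexHull_bipyramid_le {h : ℝ} (hh : 0 ≤ h) :
    volume (convexHull ℝ
      {!₂[0, 1, 0], !₂[0, -1, h], !₂[0, -1, -h], !₂[-1, 0, 0], (!₂[1, 0, 0] : ℝ³)}) ≤
      ENNReal.ofReal (8 * h) := by
  have hsub : convexHull ℝ {!₂[0, 1, 0], !₂[0, -1, h], !₂[0, -1, -h], !₂[-1, 0, 0],
      (!₂[1, 0, 0] : ℝ³)} ⊆ box ![-1, -1, -h] ![1, 1, h] := by
    refine convexHull_min ?_ (convex_box _ _)
    rintro p (rfl | rfl | rfl | rfl | rfl) <;> refine mem_box.2 fun i => ?_ <;> fin_cases i <;>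
      simp [hh]
  refine (measure_mono hsub).trans_eq ?_
  rw [volume_box_vec3, ← ENNReal.ofReal_mul (by norm_num), ← ENNReal.ofReal_mul (by norm_num)]
  ring_nf

theorem vec3_mem_segment {b x : ℝ} (hx : |x| ≤ b) :
    (!₂[x, 0, 0] : ℝ³) ∈ segment ℝ !₂[-b, 0, 0] !₂[b, 0, 0] := by
  have hx' : x ∈ segment ℝ (-b) b := by
    rw [segment_eq_Icc (by linarith [abs_nonneg x])]; exact abs_le.1 hx
  have := Set.mem_image_of_mem (LinearMap.toSpanSingleton ℝ ℝ³ !₂[1, 0, 0]).toAffineMap hx'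
  rw [image_segment] at this
  simpa [← WithLp.toLp_smul, ← WithLp.toLp_neg] using this

theorem box_subset_convexHull_tetrahedron {b s t : ℝ} (hb : 1 ≤ b) (hs : s ^ 2 = 3)
    (ht : t ^ 2 = 6) (hs₀ : 0 < s) (ht₀ : 0 < t) :
    box ![-(1 / 8), s / 4, t / 8] ![1 / 8, 3 * s / 8, t / 4] ⊆
      convexHull ℝ {!₂[0, s, 0], !₂[-b, 0, 0], !₂[b, 0, 0], (!₂[0, s / 3, t / 3] : ℝ³)} := by
  intro p hp
  obtain ⟨x, y, z, rfl⟩ := exists_eq_vec3 p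
  obtain ⟨hx, hx'⟩ : -(1 / 8) ≤ x ∧ x ≤ 1 / 8 := mem_box.1 hp 0
  obtain ⟨hy, hy'⟩ : s / 4 ≤ y ∧ y ≤ 3 * s / 8 := mem_box.1 hp 1
  obtain ⟨hz, hz'⟩ : t / 8 ≤ z ∧ z ≤ t / 4 := mem_box.1 hp 2
  have hys : 3 / 4 ≤ y * s ∧ y * s ≤ 9 / 8 := by constructor <;> nlinarith
  have hzt : 3 / 4 ≤ z * t ∧ z * t ≤ 3 / 2 := by constructor <;> nlinarith
  have hmem : ∀ {q : ℝ³}, q ∈ segment ℝ !₂[-b, 0, 0] !₂[b, 0, 0] →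
      q ∈ convexHull ℝ {!₂[0, s, 0], !₂[-b, 0, 0], !₂[b, 0, 0], (!₂[0, s / 3, t / 3] : ℝ³)} :=
    fun hq => segment_subset_convexHull (by simp) (by simp) hq
  set l := y * s / 3 - z * t / 6 with hl
  set m := z * t / 2 with hm
  have hp : !₂[x, y, z] = ((1 - l - m - x) / 2) • !₂[-1, 0, 0]
      + ((1 - l - m + x) / 2) • !₂[1, 0, 0] + l • !₂[0, s, 0] + m • (!₂[0, s / 3, t / 3] : ℝ³) := by
    simp only [smul_vec3, vec3_add_vec3]
    apply vec3_eq_vec3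
    · ring
    · linear_combination (-y / 3) * hs
    · linear_combination (-z / 6) * ht
  rw [hp]
  refine (convex_convexHull ℝ _).add_smul_four_mem
    (hmem (vec3_mem_segment (by norm_num; linarith)))
    (hmem (vec3_mem_segment (by norm_num; linarith)))
    (subset_convexHull ℝ _ (by simp)) (subset_convexHull ℝ _ (by simp)) ?_ ?_ ?_ ?_ ?_ <;> linarith

theorem ofReal_le_volume_convexHull_tetrahedron {b s t : ℝ} (hb : 1 ≤ b) (hs : s ^ 2 = 3)
    (ht : t ^ 2 = 6) (hs₀ : 0 < s) (ht₀ : 0 < t) :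
    ENNReal.ofReal (s * t / 256) ≤
      volume
        (convexHull ℝ {!₂[0, s, 0], !₂[-b, 0, 0], !₂[b, 0, 0], (!₂[0, s / 3, t / 3] : ℝ³)}) := by
  refine le_of_eq_of_le ?_ (measure_mono (box_subset_convexHull_tetrahedron hb hs ht hs₀ ht₀))
  rw [volume_box_vec3, ← ENNReal.ofReal_mul (by norm_num), ← ENNReal.ofReal_mul (by nlinarith)]
  ring_nf

theorem dist_bipyramids_eq {h b s t : ℝ} (hb : b ^ 2 = 1 + h ^ 2) (hs : s ^ 2 = 3)
    (ht : t ^ 2 = 6) :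
    let A : ℝ³ := !₂[0, 1, 0]; let B : ℝ³ := !₂[0, -1, h]; let D : ℝ³ := !₂[0, -1, -h]
    let E : ℝ³ := !₂[-1, 0, 0]; let F : ℝ³ := !₂[1, 0, 0]
    let A' : ℝ³ := !₂[0, s, 0]; let B' : ℝ³ := !₂[-b, 0, 0]; let D' : ℝ³ := !₂[b, 0, 0]
    let E' : ℝ³ := !₂[0, s / 3, t / 3]; let F' : ℝ³ := !₂[0, s / 3, -(t / 3)]
    let C := midpoint ℝ E F
    let C' := midpoint ℝ B' D'
    dist A B = dist A' B' ∧ dist A D = dist A' D' ∧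
    dist A E = dist A' E' ∧ dist A F = dist A' F' ∧
    dist B E = dist B' E' ∧ dist B F = dist B' F' ∧
    dist D E = dist D' E' ∧ dist D F = dist D' F' ∧
    dist B C = dist B' C' ∧ dist D C = dist D' C' ∧
    dist C E = dist C' E' ∧ dist C F = dist C' F' := by
  dsimp only
  simp only [midpoint_vec3, dist_vec3]
  refine ⟨?_, ?_, ?_, ?_, ?_, ?_, ?_, ?_, ?_, ?_, ?_, ?_⟩ <;> congr 1 <;> ring_nf <;> linarith

theorem stmt_18_general (c : ℝ) :
    ∃ A B D E F A' B' D' E' F' : EuclideanSpace ℝ (Fin 3),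
      (let C := midpoint ℝ E F
       let C' := midpoint ℝ B' D'
       dist A B = dist A' B' ∧ dist A D = dist A' D' ∧
       dist A E = dist A' E' ∧ dist A F = dist A' F' ∧
       dist B E = dist B' E' ∧ dist B F = dist B' F' ∧
       dist D E = dist D' E' ∧ dist D F = dist D' F' ∧
       dist B C = dist B' C' ∧ dist D C = dist D' C' ∧
       dist C E = dist C' E' ∧ dist C F = dist C' F') ∧
      0 < MeasureTheory.volume
          (convexHull ℝ ({A, B, D, E, F} : Set (EuclideanSpace ℝ (Fin 3)))) ∧
      MeasureTheory.volume
          (convexHull ℝ ({A', B', D', E'} : Set (EuclideanSpace ℝ (Fin 3))) ∪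
           convexHull ℝ ({A', B', D', F'} : Set (EuclideanSpace ℝ (Fin 3))))
        > ENNReal.ofReal c *
          MeasureTheory.volume
            (convexHull ℝ ({A, B, D, E, F} : Set (EuclideanSpace ℝ (Fin 3)))) := by
  obtain ⟨h, hh, hch⟩ := exists_pos_mul_lt (by positivity : (0 : ℝ) < √3 * √6 / 256) (8 * c)
  have hs : √3 ^ 2 = 3 := Real.sq_sqrt (by norm_num)
  have ht : √6 ^ 2 = 6 := Real.sq_sqrt (by norm_num)
  have hb : √(1 + h ^ 2) ^ 2 = 1 + h ^ 2 := Real.sq_sqrt (by positivity)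
  have hb₁ : 1 ≤ √(1 + h ^ 2) := Real.one_le_sqrt.2 (by nlinarith)
  refine ⟨!₂[0, 1, 0], !₂[0, -1, h], !₂[0, -1, -h], !₂[-1, 0, 0], !₂[1, 0, 0],
    !₂[0, √3, 0], !₂[-√(1 + h ^ 2), 0, 0], !₂[√(1 + h ^ 2), 0, 0], !₂[0, √3 / 3, √6 / 3],
    !₂[0, √3 / 3, -(√6 / 3)], dist_bipyramids_eq hb hs ht, volume_convexHull_bipyramid_pos hh, ?_⟩
  refine (mul_le_mul' le_rfl (volume_convexHull_bipyramid_le hh.le)).trans_lt ?_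
  refine lt_of_lt_of_le ?_ ((ofReal_le_volume_convexHull_tetrahedron hb₁ hs ht (by positivity)
    (by positivity)).trans (measure_mono subset_union_left))
  rw [← ENNReal.ofReal_mul' (by positivity), ENNReal.ofReal_lt_ofReal_iff (by positivity)]
  linarith

theorem stmt_18 (c : ℝ) (hc : 0 < c) :
    ∃ A B D E F A' B' D' E' F' : EuclideanSpace ℝ (Fin 3),
      (let C := midpoint ℝ E F
       let C' := midpoint ℝ B' D'
       dist A B = dist A' B' ∧ dist A D = dist A' D' ∧
       dist A E = dist A' E' ∧ dist A F = dist A' F' ∧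
       dist B E = dist B' E' ∧ dist B F = dist B' F' ∧
       dist D E = dist D' E' ∧ dist D F = dist D' F' ∧
       dist B C = dist B' C' ∧ dist D C = dist D' C' ∧
       dist C E = dist C' E' ∧ dist C F = dist C' F') ∧
      0 < MeasureTheory.volume
          (convexHull ℝ ({A, B, D, E, F} : Set (EuclideanSpace ℝ (Fin 3)))) ∧
      MeasureTheory.volume
          (convexHull ℝ ({A', B', D', E'} : Set (EuclideanSpace ℝ (Fin 3))) ∪
           convexHull ℝ ({A', B', D', F'} : Set (EuclideanSpace ℝ (Fin 3))))
        > ENNReal.ofReal c *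
          MeasureTheory.volume
            (convexHull ℝ ({A, B, D, E, F} : Set (EuclideanSpace ℝ (Fin 3)))) :=
  stmt_18_general c
end
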